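/- In the construction graph with orthogonal quadruple (a,b,c,d): d((a,b,c), u) = 4, d(u, (d,c,b)) = 3, d((a,b,c), v) = 3, and d(v, (d,c,b)) = 4; consequently every path from (a,b,c) to (d,c,b) passing through u or v has length at least 7. -/

import Mathlib

/-- The total weight of a walk, given as the list of its vertices. -/
def walkWeight {V : Type*} (wt : V → V → ℕ∞) : List V → ℕ∞
  | x :: y :: rest => wt x y + walkWeight wt (y :: rest)
  | _ => 0

/-- `l` is (the vertex list of) a walk from `x` to `y`. -/
def IsWalk {V : Type*} (l : List V) (x y : V) : Prop :=
  l ≠ [] ∧ l.head? = some x ∧ l.getLast? = some y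

/-- Shortest-path distance from `x` to `y`. -/
noncomputable def gdist {V : Type*} (wt : V → V → ℕ∞) (x y : V) : ℕ∞ :=
  sInf {w | ∃ l : List V, IsWalk l x y ∧ walkWeight wt l = w}

/-!
Lower bounds come from feasible potentials: if `p y ≤ p x + wt x y` for every arc, then
`p y - p x` bounds the weight of every walk from `x` to `y`. Collapsing each of the eight parts
to a point gives an 8-vertex quotient graph (`partWeight`) in which the arc from part `i` to
part `j` is no heavier than any arc between distinct vertices of these parts, so shortest-path
distances in the quotient graph from `ABC` and to `DCB` are feasible potentials for the
construction graph. They give `4, 3` at `u` and `3, 4` at `v`; short explicit walks show that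
these bounds are attained, and a walk through `u` or `v` splits there into two walks of total
weight at least `4 + 3`.
-/

section Walks

variable {V : Type*} {wt : V → V → ℕ∞}

theorem walkWeight_append_cons (xs ys : List V) (z : V) :
    walkWeight wt (xs ++ z :: ys) = walkWeight wt (xs ++ [z]) + walkWeight wt (z :: ys) := by
  induction xs with
  | nil => simp [walkWeight]
  | cons a xs ih =>
    cases xs with
    | nil => simp [walkWeight]
    | cons b xs => simp only [List.cons_append, walkWeight] at ih ⊢; rw [ih, add_assoc]

theorem walkWeight_reverse (l : List V) :
    walkWeight wt l.reverse = walkWeight (flip wt) l := by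
  induction l with
  | nil => rfl
  | cons a l ih =>
    cases l with
    | nil => rfl
    | cons b l =>
      rw [List.reverse_cons, List.reverse_cons, List.append_assoc, List.singleton_append,
        walkWeight_append_cons, ← List.reverse_cons, ih]
      simp [walkWeight, flip, add_comm]

theorem IsWalk.reverse {l : List V} {x y : V} (hl : IsWalk l x y) : IsWalk l.reverse y x :=
  ⟨List.reverse_ne_nil_iff.2 hl.1, by simpa using hl.2.2, by simpa using hl.2.1⟩

theorem IsWalk.le_add_walkWeight {p : V → ℕ∞} (hp : ∀ a b, p b ≤ p a + wt a b) :
    ∀ {l : List V} {x y : V}, IsWalk l x y → p y ≤ p x + walkWeight wt l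
  | [], _, _, h => absurd rfl h.1
  | [a], x, y, ⟨_, hx, hy⟩ => by simp_all [walkWeight]
  | a :: b :: t, x, y, ⟨_, hx, hy⟩ => by
    obtain rfl : a = x := by simpa using hx
    calc p y ≤ p b + walkWeight wt (b :: t) :=
          IsWalk.le_add_walkWeight hp ⟨List.cons_ne_nil _ _, rfl, by simpa using hy⟩
      _ ≤ p a + wt a b + walkWeight wt (b :: t) := by gcongr; exact hp a b
      _ = p a + walkWeight wt (a :: b :: t) := by rw [walkWeight, add_assoc]

theorem gdist_le_walkWeight {l : List V} {x y : V} (hl : IsWalk l x y) :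
    gdist wt x y ≤ walkWeight wt l :=
  sInf_le ⟨l, hl, rfl⟩

theorem le_gdist_of_potential {p : V → ℕ∞} (hp : ∀ a b, p b ≤ p a + wt a b) {x : V}
    (hx : p x = 0) (y : V) : p y ≤ gdist wt x y :=
  le_sInf <| by rintro _ ⟨l, hl, rfl⟩; simpa [hx] using hl.le_add_walkWeight hp

theorem le_gdist_of_potential' {p : V → ℕ∞} (hp : ∀ a b, p a ≤ p b + wt a b) {y : V}
    (hy : p y = 0) (x : V) : p x ≤ gdist wt x y :=
  le_sInf <| by
    rintro _ ⟨l, hl, rfl⟩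
    simpa [hy, walkWeight_reverse] using
      hl.reverse.le_add_walkWeight (wt := flip wt) fun a b => hp b a

theorem gdist_add_gdist_le_walkWeight {l : List V} {x y z : V} (hl : IsWalk l x y)
    (hz : z ∈ l) : gdist wt x z + gdist wt z y ≤ walkWeight wt l := by
  obtain ⟨l₁, l₂, rfl⟩ := List.append_of_mem hz
  obtain ⟨-, hx, hy⟩ := hl
  rw [walkWeight_append_cons]
  refine add_le_add (gdist_le_walkWeight ⟨by simp, ?_, by simp⟩)
    (gdist_le_walkWeight ⟨by simp, rfl, ?_⟩)
  · cases l₁ <;> simp_all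
  · simpa using hy

end Walks

structure ConstructionGraph (V : Type*) where
  wt : V → V → ℕ∞
  u : V
  v : V
  ABC : Set V
  AB : Set V
  ADX : Set V
  ADY : Set V
  DC : Set V
  DCB : Set V
  disjoint : ([{u}, {v}, ABC, AB, ADX, ADY, DC, DCB] : List (Set V)).Pairwise Disjoint
  cover : ∀ x, x = u ∨ x = v ∨ x ∈ ABC ∨ x ∈ AB ∨ x ∈ ADX ∨ x ∈ ADY ∨ x ∈ DC ∨ x ∈ DCB
  arcs_ABC : ∀ x ∈ ABC, wt x u = 4 ∧ wt u x = 0 ∧ wt x v = ⊤ ∧ wt v x = ⊤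
  arcs_AB : ∀ x ∈ AB, wt u x = 0 ∧ wt x u = 3 ∧ wt x v = 2 ∧ wt v x = 2
  arcs_ADX : ∀ x ∈ ADX, wt u x = 1 ∧ wt x u = 1 ∧ wt v x = 1 ∧ wt x v = 1
  arcs_ADY : ∀ x ∈ ADY, wt u x = 2 ∧ wt x u = 2 ∧ wt v x = 2 ∧ wt x v = 2
  arcs_DC : ∀ x ∈ DC, wt x u = 2 ∧ wt u x = 2 ∧ wt x v = 0 ∧ wt v x = 3
  arcs_DCB : ∀ x ∈ DCB, wt x v = 0 ∧ wt v x = 4 ∧ wt x u = ⊤ ∧ wt u x = ⊤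
  arcs_uv : wt u v = 2 ∧ wt v u = 2
  var_weight : ∀ x y, x ≠ u → x ≠ v → y ≠ u → y ≠ v → wt x y = 1 ∨ wt x y = ⊤
  var_adj : ∀ x y, x ≠ u → x ≠ v → y ≠ u → y ≠ v → wt x y ≠ ⊤ →
    (x ∈ ABC ∧ y ∈ AB) ∨ (x ∈ AB ∧ y ∈ ABC) ∨ (x ∈ AB ∧ y ∈ AB) ∨
    (x ∈ AB ∧ y ∈ ADY) ∨ (x ∈ ADY ∧ y ∈ AB) ∨ (x ∈ ADX ∧ y ∈ ADY) ∨
    (x ∈ ADY ∧ y ∈ ADX) ∨ (x ∈ ADY ∧ y ∈ DC) ∨ (x ∈ DC ∧ y ∈ ADY) ∨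
    (x ∈ DC ∧ y ∈ DC) ∨ (x ∈ DC ∧ y ∈ DCB) ∨ (x ∈ DCB ∧ y ∈ DC)

namespace ConstructionGraph

variable {V : Type*} (G : ConstructionGraph V)

def part : Fin 8 → Set V := ![{G.u}, {G.v}, G.ABC, G.AB, G.ADX, G.ADY, G.DC, G.DCB]

theorem pairwise_disjoint_part : Pairwise (Function.onFun Disjoint G.part) :=
  (Std.Symm.pairwise_on _).2 (List.pairwise_ofFn.1 G.disjoint)

theorem exists_mem_part (x : V) : ∃ i, x ∈ G.part i := by
  rcases G.cover x with h | h | h | h | h | h | h | h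
  exacts [⟨0, h⟩, ⟨1, h⟩, ⟨2, h⟩, ⟨3, h⟩, ⟨4, h⟩, ⟨5, h⟩, ⟨6, h⟩, ⟨7, h⟩]

noncomputable def index (x : V) : Fin 8 := (G.exists_mem_part x).choose

theorem index_eq {x : V} {i : Fin 8} (hx : x ∈ G.part i) : G.index x = i := by
  by_contra h
  exact Set.disjoint_left.1 (G.pairwise_disjoint_part h) (G.exists_mem_part x).choose_spec hx

@[simp] theorem index_u : G.index G.u = 0 := G.index_eq (i := 0) rfl
@[simp] theorem index_v : G.index G.v = 1 := G.index_eq (i := 1) rfl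

variable {G} {x : V}

@[simp] theorem index_of_mem_ABC (hx : x ∈ G.ABC) : G.index x = 2 := G.index_eq hx
@[simp] theorem index_of_mem_AB (hx : x ∈ G.AB) : G.index x = 3 := G.index_eq hx
@[simp] theorem index_of_mem_ADX (hx : x ∈ G.ADX) : G.index x = 4 := G.index_eq hx
@[simp] theorem index_of_mem_ADY (hx : x ∈ G.ADY) : G.index x = 5 := G.index_eq hx
@[simp] theorem index_of_mem_DC (hx : x ∈ G.DC) : G.index x = 6 := G.index_eq hx
@[simp] theorem index_of_mem_DCB (hx : x ∈ G.DCB) : G.index x = 7 := G.index_eq hx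

/-- Indexed like `part`; `⊤` means there is no arc between the two parts. -/
def partWeight : Fin 8 → Fin 8 → ℕ∞ :=
  ![![⊤, 2, 0, 0, 1, 2, 2, ⊤],
    ![2, ⊤, ⊤, 2, 1, 2, 3, 4],
    ![4, ⊤, ⊤, 1, ⊤, ⊤, ⊤, ⊤],
    ![3, 2, 1, 1, ⊤, 1, ⊤, ⊤],
    ![1, 1, ⊤, ⊤, ⊤, 1, ⊤, ⊤],
    ![2, 2, ⊤, 1, 1, ⊤, 1, ⊤],
    ![2, 0, ⊤, ⊤, ⊤, 1, 1, 1],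
    ![⊤, 0, ⊤, ⊤, ⊤, ⊤, 1, ⊤]]

variable (G)

theorem partWeight_le_wt_u {y : V} (hy : y ≠ G.u) :
    partWeight 0 (G.index y) ≤ G.wt G.u y ∧ partWeight (G.index y) 0 ≤ G.wt y G.u := by
  rcases G.cover y with rfl | rfl | hy | hy | hy | hy | hy | hy
  · exact absurd rfl hy
  · simp [partWeight, G.arcs_uv]
  · simp [partWeight, hy, G.arcs_ABC y hy]
  · simp [partWeight, hy, G.arcs_AB y hy]
  · simp [partWeight, hy, G.arcs_ADX y hy]
  · simp [partWeight, hy, G.arcs_ADY y hy]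
  · simp [partWeight, hy, G.arcs_DC y hy]
  · simp [partWeight, hy, G.arcs_DCB y hy]

theorem partWeight_le_wt_v {y : V} (hy : y ≠ G.v) :
    partWeight 1 (G.index y) ≤ G.wt G.v y ∧ partWeight (G.index y) 1 ≤ G.wt y G.v := by
  rcases G.cover y with rfl | rfl | hy | hy | hy | hy | hy | hy
  · simp [partWeight, G.arcs_uv]
  · exact absurd rfl hy
  · simp [partWeight, hy, G.arcs_ABC y hy]
  · simp [partWeight, hy, G.arcs_AB y hy]
  · simp [partWeight, hy, G.arcs_ADX y hy]
  · simp [partWeight, hy, G.arcs_ADY y hy]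
  · simp [partWeight, hy, G.arcs_DC y hy]
  · simp [partWeight, hy, G.arcs_DCB y hy]

theorem partWeight_le_wt_of_ne_uv {x y : V} (hxu : x ≠ G.u) (hxv : x ≠ G.v) (hyu : y ≠ G.u)
    (hyv : y ≠ G.v) : partWeight (G.index x) (G.index y) ≤ G.wt x y := by
  rcases G.var_weight x y hxu hxv hyu hyv with h | h
  · rcases G.var_adj x y hxu hxv hyu hyv (by simp [h]) with
      ⟨hx, hy⟩ | ⟨hx, hy⟩ | ⟨hx, hy⟩ | ⟨hx, hy⟩ | ⟨hx, hy⟩ | ⟨hx, hy⟩ | ⟨hx, hy⟩ | ⟨hx, hy⟩ |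
      ⟨hx, hy⟩ | ⟨hx, hy⟩ | ⟨hx, hy⟩ | ⟨hx, hy⟩ <;>
    simp [partWeight, hx, hy, h]
  · simp [h]

theorem partWeight_le_wt {x y : V} (hxy : x ≠ y) :
    partWeight (G.index x) (G.index y) ≤ G.wt x y := by
  by_cases hxu : x = G.u
  · subst hxu; simpa using (G.partWeight_le_wt_u hxy.symm).1
  by_cases hxv : x = G.v
  · subst hxv; simpa using (G.partWeight_le_wt_v hxy.symm).1
  by_cases hyu : y = G.u
  · subst hyu; simpa using (G.partWeight_le_wt_u hxu).2
  by_cases hyv : y = G.v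
  · subst hyv; simpa using (G.partWeight_le_wt_v hxv).2
  exact G.partWeight_le_wt_of_ne_uv hxu hxv hyu hyv

def distFromABC : Fin 8 → ℕ∞ := ![4, 3, 0, 1, 3, 2, 3, 4]

def distToDCB : Fin 8 → ℕ∞ := ![3, 4, 4, 3, 3, 2, 1, 0]

theorem distFromABC_le_add_partWeight (i j : Fin 8) :
    distFromABC j ≤ distFromABC i + partWeight i j := by
  revert i j; decide

theorem distToDCB_le_add_partWeight (i j : Fin 8) :
    distToDCB i ≤ distToDCB j + partWeight i j := by
  revert i j; decide

theorem distFromABC_le_gdist {a : V} (ha : a ∈ G.ABC) (x : V) :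
    distFromABC (G.index x) ≤ gdist G.wt a x := by
  refine le_gdist_of_potential (p := fun y => distFromABC (G.index y)) (fun y z => ?_)
    (by simp [ha, distFromABC]) x
  obtain rfl | hyz := eq_or_ne y z
  · exact le_self_add
  · exact (distFromABC_le_add_partWeight _ _).trans (by gcongr; exact G.partWeight_le_wt hyz)

theorem distToDCB_le_gdist {d : V} (hd : d ∈ G.DCB) (x : V) :
    distToDCB (G.index x) ≤ gdist G.wt x d := by
  refine le_gdist_of_potential' (p := fun y => distToDCB (G.index y)) (fun y z => ?_)
    (by simp [hd, distToDCB]) x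
  obtain rfl | hyz := eq_or_ne y z
  · exact le_self_add
  · exact (distToDCB_le_add_partWeight _ _).trans (by gcongr; exact G.partWeight_le_wt hyz)

theorem gdist_ABC_u {a : V} (ha : a ∈ G.ABC) : gdist G.wt a G.u = 4 := by
  refine le_antisymm ?_ (by simpa [distFromABC] using G.distFromABC_le_gdist ha G.u)
  simpa [walkWeight, G.arcs_ABC a ha] using
    gdist_le_walkWeight (wt := G.wt) (l := [a, G.u]) ⟨by simp, rfl, rfl⟩

theorem gdist_u_DCB {d y : V} (hd : d ∈ G.DCB) (hy : y ∈ G.DC) (hyd : G.wt y d = 1) :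
    gdist G.wt G.u d = 3 := by
  refine le_antisymm ?_ (by simpa [distToDCB] using G.distToDCB_le_gdist hd G.u)
  have := gdist_le_walkWeight (wt := G.wt) (l := [G.u, y, d]) ⟨by simp, rfl, rfl⟩
  simp only [walkWeight, (G.arcs_DC y hy).2.1, hyd, add_zero] at this
  exact this.trans_eq (by norm_num)

theorem gdist_ABC_v {a y : V} (ha : a ∈ G.ABC) (hy : y ∈ G.AB) (hay : G.wt a y = 1) :
    gdist G.wt a G.v = 3 := by
  refine le_antisymm ?_ (by simpa [distFromABC] using G.distFromABC_le_gdist ha G.v)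
  have := gdist_le_walkWeight (wt := G.wt) (l := [a, y, G.v]) ⟨by simp, rfl, rfl⟩
  simp only [walkWeight, hay, (G.arcs_AB y hy).2.2.1, add_zero] at this
  exact this.trans_eq (by norm_num)

theorem gdist_v_DCB {d : V} (hd : d ∈ G.DCB) : gdist G.wt G.v d = 4 := by
  refine le_antisymm ?_ (by simpa [distToDCB] using G.distToDCB_le_gdist hd G.v)
  simpa [walkWeight, G.arcs_DCB d hd] using
    gdist_le_walkWeight (wt := G.wt) (l := [G.v, d]) ⟨by simp, rfl, rfl⟩

end ConstructionGraph

theorem stmt_14_general {V : Type*} (wt : V → V → ℕ∞) (u v : V)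
    (ABC AB ADX ADY DC DCB : Set V) (abc dcb : V)
    (habc : abc ∈ ABC) (hdcb : dcb ∈ DCB)
    -- the eight parts are pairwise disjoint and cover the vertex set
    (hdisj : ([{u}, {v}, ABC, AB, ADX, ADY, DC, DCB] : List (Set V)).Pairwise Disjoint)
    (hpart : ∀ x : V, x = u ∨ x = v ∨ x ∈ ABC ∨ x ∈ AB ∨ x ∈ ADX ∨ x ∈ ADY ∨ x ∈ DC ∨ x ∈ DCB)
    -- constant-part arcs incident to u and v (⊤ means the arc is absent)
    (hABC : ∀ x ∈ ABC, wt x u = 4 ∧ wt u x = 0 ∧ wt x v = ⊤ ∧ wt v x = ⊤)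
    (hAB : ∀ x ∈ AB, wt u x = 0 ∧ wt x u = 3 ∧ wt x v = 2 ∧ wt v x = 2)
    (hADX : ∀ x ∈ ADX, wt u x = 1 ∧ wt x u = 1 ∧ wt v x = 1 ∧ wt x v = 1)
    (hADY : ∀ x ∈ ADY, wt u x = 2 ∧ wt x u = 2 ∧ wt v x = 2 ∧ wt x v = 2)
    (hDC : ∀ x ∈ DC, wt x u = 2 ∧ wt u x = 2 ∧ wt x v = 0 ∧ wt v x = 3)
    (hDCB : ∀ x ∈ DCB, wt x v = 0 ∧ wt v x = 4 ∧ wt x u = ⊤ ∧ wt u x = ⊤)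
    (huv : wt u v = 2 ∧ wt v u = 2)
    -- all arcs of the variable part have weight 1 (or are absent)
    (hvar1 : ∀ x y : V, x ≠ u → x ≠ v → y ≠ u → y ≠ v → wt x y = 1 ∨ wt x y = ⊤)
    -- variable-part arcs only join consecutive layers (or are index-switching)
    (hadj : ∀ x y : V, x ≠ u → x ≠ v → y ≠ u → y ≠ v → wt x y ≠ ⊤ →
      (x ∈ ABC ∧ y ∈ AB) ∨ (x ∈ AB ∧ y ∈ ABC) ∨ (x ∈ AB ∧ y ∈ AB) ∨
      (x ∈ AB ∧ y ∈ ADY) ∨ (x ∈ ADY ∧ y ∈ AB) ∨ (x ∈ ADX ∧ y ∈ ADY) ∨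
      (x ∈ ADY ∧ y ∈ ADX) ∨ (x ∈ ADY ∧ y ∈ DC) ∨ (x ∈ DC ∧ y ∈ ADY) ∨
      (x ∈ DC ∧ y ∈ DC) ∨ (x ∈ DC ∧ y ∈ DCB) ∨ (x ∈ DCB ∧ y ∈ DC))
    -- abc has a weight-1 edge to AB, and dcb has a weight-1 edge to DC
    (hABCnb : ∃ y ∈ AB, wt abc y = 1 ∧ wt y abc = 1)
    (hDCBnb : ∃ y ∈ DC, wt dcb y = 1 ∧ wt y dcb = 1) :
    gdist wt abc u = 4 ∧ gdist wt u dcb = 3 ∧ gdist wt abc v = 3 ∧ gdist wt v dcb = 4 ∧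
    ∀ l : List V, IsWalk l abc dcb → (u ∈ l ∨ v ∈ l) → 7 ≤ walkWeight wt l := by
  let G : ConstructionGraph V :=
    ⟨wt, u, v, ABC, AB, ADX, ADY, DC, DCB, hdisj, hpart, hABC, hAB, hADX, hADY, hDC, hDCB, huv,
      hvar1, hadj⟩
  obtain ⟨b, hb, hab, -⟩ := hABCnb
  obtain ⟨c, hc, -, hcd⟩ := hDCBnb
  have hu : gdist wt abc u = 4 := G.gdist_ABC_u habc
  have hu' : gdist wt u dcb = 3 := G.gdist_u_DCB hdcb hc hcd
  have hv : gdist wt abc v = 3 := G.gdist_ABC_v habc hb hab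
  have hv' : gdist wt v dcb = 4 := G.gdist_v_DCB hdcb
  refine ⟨hu, hu', hv, hv', fun l hl hm => ?_⟩
  rcases hm with hm | hm
  · exact (gdist_add_gdist_le_walkWeight hl hm).trans_eq' (by rw [hu, hu']; norm_num)
  · exact (gdist_add_gdist_le_walkWeight hl hm).trans_eq' (by rw [hv, hv']; norm_num)

/-- In the reduction graph, for the vertices `abc = (a,b,c)` and `dcb = (d,c,b)`:
`d(abc,u) = 4`, `d(u,dcb) = 3`, `d(abc,v) = 3`, `d(v,dcb) = 4`; consequently every
walk from `abc` to `dcb` passing through `u` or `v` has weight at least 7. -/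
theorem stmt_14 {V : Type*} [Fintype V] (wt : V → V → ℕ∞) (u v : V)
    (ABC AB ADX ADY DC DCB : Set V) (abc dcb : V)
    (habc : abc ∈ ABC) (hdcb : dcb ∈ DCB)
    -- the eight parts are pairwise disjoint and cover the vertex set
    (hdisj : ([{u}, {v}, ABC, AB, ADX, ADY, DC, DCB] : List (Set V)).Pairwise Disjoint)
    (hpart : ∀ x : V, x = u ∨ x = v ∨ x ∈ ABC ∨ x ∈ AB ∨ x ∈ ADX ∨ x ∈ ADY ∨ x ∈ DC ∨ x ∈ DCB)
    -- constant-part arcs incident to u and v (⊤ means the arc is absent)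
    (hABC : ∀ x ∈ ABC, wt x u = 4 ∧ wt u x = 0 ∧ wt x v = ⊤ ∧ wt v x = ⊤)
    (hAB : ∀ x ∈ AB, wt u x = 0 ∧ wt x u = 3 ∧ wt x v = 2 ∧ wt v x = 2)
    (hADX : ∀ x ∈ ADX, wt u x = 1 ∧ wt x u = 1 ∧ wt v x = 1 ∧ wt x v = 1)
    (hADY : ∀ x ∈ ADY, wt u x = 2 ∧ wt x u = 2 ∧ wt v x = 2 ∧ wt x v = 2)
    (hDC : ∀ x ∈ DC, wt x u = 2 ∧ wt u x = 2 ∧ wt x v = 0 ∧ wt v x = 3)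
    (hDCB : ∀ x ∈ DCB, wt x v = 0 ∧ wt v x = 4 ∧ wt x u = ⊤ ∧ wt u x = ⊤)
    (huv : wt u v = 2 ∧ wt v u = 2) (hloop : wt u u = ⊤ ∧ wt v v = ⊤)
    -- all arcs of the variable part have weight 1 (or are absent)
    (hvar1 : ∀ x y : V, x ≠ u → x ≠ v → y ≠ u → y ≠ v → wt x y = 1 ∨ wt x y = ⊤)
    -- variable-part arcs only join consecutive layers (or are index-switching)
    (hadj : ∀ x y : V, x ≠ u → x ≠ v → y ≠ u → y ≠ v → wt x y ≠ ⊤ →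
      (x ∈ ABC ∧ y ∈ AB) ∨ (x ∈ AB ∧ y ∈ ABC) ∨ (x ∈ AB ∧ y ∈ AB) ∨
      (x ∈ AB ∧ y ∈ ADY) ∨ (x ∈ ADY ∧ y ∈ AB) ∨ (x ∈ ADX ∧ y ∈ ADY) ∨
      (x ∈ ADY ∧ y ∈ ADX) ∨ (x ∈ ADY ∧ y ∈ DC) ∨ (x ∈ DC ∧ y ∈ ADY) ∨
      (x ∈ DC ∧ y ∈ DC) ∨ (x ∈ DC ∧ y ∈ DCB) ∨ (x ∈ DCB ∧ y ∈ DC))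
    -- abc has a weight-1 edge to AB, and dcb has a weight-1 edge to DC
    (hABCnb : ∃ y ∈ AB, wt abc y = 1 ∧ wt y abc = 1)
    (hDCBnb : ∃ y ∈ DC, wt dcb y = 1 ∧ wt y dcb = 1) :
    gdist wt abc u = 4 ∧ gdist wt u dcb = 3 ∧ gdist wt abc v = 3 ∧ gdist wt v dcb = 4 ∧
    ∀ l : List V, IsWalk l abc dcb → (u ∈ l ∨ v ∈ l) → 7 ≤ walkWeight wt l :=
  stmt_14_general wt u v ABC AB ADX ADY DC DCB abc dcb habc hdcb hdisj hpart hABC hAB hADX hADY hDC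
    hDCB huv hvar1 hadj hABCnb hDCBnb
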